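/- For every n ≥ 1, every tuning parameter η_n > 0 and all nonnegative real numbers a_n and b_n, the infimal coverage probability of the interval C_{A,n} = [θ̂_A − a_n, θ̂_A + b_n] is given by inf_{θ∈ℝ} P_{n,θ}(θ ∈ C_{A,n}) = Φ(n^{1/2}(a_n − η_n)) − Φ(n^{1/2}((a_n − b_n)/2 − sqrt(((a_n + b_n)/2)² + η_n²))) if a_n ≤ b_n, and = Φ(n^{1/2}(b_n − η_n)) − Φ(n^{1/2}((b_n − a_n)/2 − sqrt(((a_n + b_n)/2)² + η_n²))) if a_n > b_n. -/

import Mathlib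

open MeasureTheory ProbabilityTheory Filter
open scoped NNReal

/-- Standard normal cumulative distribution function Φ. -/
noncomputable def stdNormCDF (x : ℝ) : ℝ :=
  ((gaussianReal 0 1) (Set.Iic x)).toReal

/-- Soft-thresholding (LASSO) estimator with threshold η, as a function of ȳ. -/
noncomputable def softThresh (η y : ℝ) : ℝ := Real.sign y * max (|y| - η) 0

/-- Hard-thresholding estimator with threshold η, as a function of ȳ. -/
noncomputable def hardThresh (η y : ℝ) : ℝ := if η < |y| then y else 0

/-- Adaptive LASSO estimator with tuning parameter η, as a function of ȳ. -/
noncomputable def adaLasso (η y : ℝ) : ℝ := if |y| ≤ η then 0 else y - η ^ 2 / y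

/-- Coverage probability `P_{n,θ}(θ ∈ [est(ȳ) - a, est(ȳ) + b])` in the
known-variance case (σ = 1), where ȳ ~ N(θ, 1/n). -/
noncomputable def cover (n : ℕ) (est : ℝ → ℝ) (a b θ : ℝ) : ℝ :=
  ((gaussianReal θ ((n : ℝ≥0))⁻¹)
    {y : ℝ | est y - a ≤ θ ∧ θ ≤ est y + b}).toReal

/-!
Since `adaLasso η` is nondecreasing, `θ` is covered iff `ȳ ∈ [-u (b - θ), u (a + θ)]`, where
`u = adaLassoInv η` is its upper inverse; so the coverage is
`Φ(√n (u (a + θ) - θ)) + Φ(√n (u (b - θ) + θ)) - 1`. Write `u t = t ± g t` with the shrinkage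
`g = adaLassoGap η`, which is even, at most `η = g 0`, and decreasing and convex on `[0, ∞)`.
For `a ≤ b` the infimum is the limit as `θ ↑ -a`, where `u (a + θ)` jumps from `-η` to `η`.
On `[-a, b]` the coverage exceeds it by monotonicity of `Φ`; outside, convexity of `g` shows
that the mass gained on one side of the coverage interval is that of a longer interval than the
mass lost on the other, and the lost interval sits at the edge of a symmetric interval containing
the gained one, so unimodality of the normal density concludes. The case `b < a` follows by the
reflection `θ ↦ -θ`.
-/

open Set Topology

theorem ciInf_eq_of_forall_le_of_tendsto {ι α : Type*} [Nonempty ι]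
    [ConditionallyCompleteLattice α] [TopologicalSpace α] [ClosedIciTopology α] {f : ι → α}
    {l : Filter ι} [l.NeBot] {m : α}
    (hle : ∀ i, m ≤ f i) (hf : Tendsto f l (𝓝 m)) : ⨅ i, f i = m :=
  le_antisymm (ge_of_tendsto hf (Eventually.of_forall (ciInf_le ⟨m, forall_mem_range.2 hle⟩)))
    (le_ciInf hle)

theorem stdNormCDF_eq_integral (x : ℝ) :
    stdNormCDF x = ∫ t in Iic x, gaussianPDFReal 0 1 t := by
  rw [stdNormCDF, gaussianReal_apply_eq_integral 0 one_ne_zero,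
    ENNReal.toReal_ofReal (setIntegral_nonneg measurableSet_Iic
      fun t _ ↦ gaussianPDFReal_nonneg 0 1 t)]

theorem stdNormCDF_sub_stdNormCDF (x y : ℝ) :
    stdNormCDF y - stdNormCDF x = ∫ t in x..y, gaussianPDFReal 0 1 t := by
  rw [stdNormCDF_eq_integral, stdNormCDF_eq_integral]
  exact intervalIntegral.integral_Iic_sub_Iic (integrable_gaussianPDFReal 0 1).integrableOn
    (integrable_gaussianPDFReal 0 1).integrableOn

theorem continuous_gaussianPDFReal (μ : ℝ) (v : ℝ≥0) : Continuous (gaussianPDFReal μ v) := by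
  unfold gaussianPDFReal
  fun_prop

theorem hasDerivAt_stdNormCDF (x : ℝ) : HasDerivAt stdNormCDF (gaussianPDFReal 0 1 x) x := by
  have hΦ : stdNormCDF = fun y ↦ stdNormCDF 0 + ∫ t in (0 : ℝ)..y, gaussianPDFReal 0 1 t := by
    ext y
    rw [← stdNormCDF_sub_stdNormCDF]
    ring
  rw [hΦ]
  exact (intervalIntegral.integral_hasDerivAt_right
    (integrable_gaussianPDFReal 0 1).intervalIntegrable
    ((continuous_gaussianPDFReal 0 1).stronglyMeasurableAtFilter _ _)
    (continuous_gaussianPDFReal 0 1).continuousAt).const_add _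

theorem continuous_stdNormCDF : Continuous stdNormCDF :=
  continuous_iff_continuousAt.2 fun x ↦ (hasDerivAt_stdNormCDF x).continuousAt

theorem monotone_stdNormCDF : Monotone stdNormCDF :=
  monotone_of_hasDerivAt_nonneg hasDerivAt_stdNormCDF (gaussianPDFReal_nonneg 0 1)

theorem stdNormCDF_neg (x : ℝ) : stdNormCDF (-x) = 1 - stdNormCDF x := by
  have hsymm (t : ℝ) : gaussianPDFReal 0 1 (-t) = gaussianPDFReal 0 1 t := by
    simp [gaussianPDFReal]
  have htail : stdNormCDF (-x) = ∫ t in Ioi x, gaussianPDFReal 0 1 t := by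
    rw [stdNormCDF_eq_integral, ← integral_comp_neg_Ioi]
    simp only [hsymm]
  rw [htail, stdNormCDF_eq_integral, ← integral_gaussianPDFReal_eq_one 0 one_ne_zero,
    ← integral_add_compl measurableSet_Iic (integrable_gaussianPDFReal 0 1), compl_Iic]
  ring

theorem toReal_gaussianReal_Icc {p q : ℝ} (hpq : p ≤ q) :
    (gaussianReal 0 1 (Icc p q)).toReal = stdNormCDF q - stdNormCDF p := by
  rw [gaussianReal_apply_eq_integral 0 one_ne_zero, ENNReal.toReal_ofReal
    (setIntegral_nonneg measurableSet_Icc fun t _ ↦ gaussianPDFReal_nonneg 0 1 t),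
    integral_Icc_eq_integral_Ioc, ← intervalIntegral.integral_of_le hpq,
    stdNormCDF_sub_stdNormCDF]

theorem gaussianPDFReal_le_of_abs_le {v : ℝ≥0} {x y : ℝ} (h : |x| ≤ |y|) :
    gaussianPDFReal 0 v y ≤ gaussianPDFReal 0 v x := by
  have hsq : x ^ 2 ≤ y ^ 2 := sq_le_sq.2 h
  simp only [gaussianPDFReal, sub_zero]
  gcongr

theorem stdNormCDF_add_sub_stdNormCDF_sub_le {h m₁ m₂ : ℝ} (hh : 0 ≤ h) (hm : |m₁| ≤ |m₂|) :
    stdNormCDF (m₂ + h) - stdNormCDF (m₂ - h) ≤ stdNormCDF (m₁ + h) - stdNormCDF (m₁ - h) := by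
  set G : ℝ → ℝ := fun m ↦ stdNormCDF (m + h) - stdNormCDF (m - h)
  have hG (m : ℝ) :
      HasDerivAt G (gaussianPDFReal 0 1 (m + h) - gaussianPDFReal 0 1 (m - h)) m :=
    ((hasDerivAt_stdNormCDF _).comp_add_const m h).sub
      ((hasDerivAt_stdNormCDF _).comp_sub_const m h)
  have hG_abs (m : ℝ) : G |m| = G m := by
    rcases abs_choice m with hm | hm
    · rw [hm]
    · simp only [G, hm, neg_add_eq_sub, ← neg_sub m h, ← neg_add', stdNormCDF_neg]
      ring
  have hG_anti : AntitoneOn G (Ici 0) := by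
    refine antitoneOn_of_hasDerivWithinAt_nonpos (convex_Ici 0)
      (fun m _ ↦ (hG m).continuousAt.continuousWithinAt) (fun m _ ↦ (hG m).hasDerivWithinAt) ?_
    intro m hm
    rw [interior_Ici, mem_Ioi] at hm
    refine sub_nonpos.2 (gaussianPDFReal_le_of_abs_le ?_)
    rw [abs_of_nonneg (by linarith : 0 ≤ m + h), abs_le]
    constructor <;> linarith
  show G m₂ ≤ G m₁
  rw [← hG_abs m₁, ← hG_abs m₂]
  exact hG_anti (abs_nonneg m₁) (abs_nonneg m₂) hm

/-- Slid from the edge of `[-R, R]` to the position of the longer `[p, q]`, the interval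
`[R - (q - p), R] ⊇ [r, R]` gains mass by unimodality. -/
theorem stdNormCDF_sub_le_sub_of_Icc_subset {p q r R : ℝ} (hRp : -R ≤ p) (hpq : p ≤ q)
    (hqR : q ≤ R) (hr : R - (q - p) ≤ r) :
    stdNormCDF R - stdNormCDF r ≤ stdNormCDF q - stdNormCDF p := by
  set h := (q - p) / 2 with hh
  have hcentre : |(p + q) / 2| ≤ |R - h| := by
    rw [abs_of_nonneg (a := R - h) (by linarith), abs_le]
    constructor <;> linarith
  have hq : (p + q) / 2 + h = q := by rw [hh]; ring
  have hp : (p + q) / 2 - h = p := by rw [hh]; ring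
  calc stdNormCDF R - stdNormCDF r
      ≤ stdNormCDF (R - h + h) - stdNormCDF (R - h - h) := by
        rw [sub_add_cancel]
        linarith [monotone_stdNormCDF (show R - h - h ≤ r by linarith)]
    _ ≤ stdNormCDF ((p + q) / 2 + h) - stdNormCDF ((p + q) / 2 - h) :=
        stdNormCDF_add_sub_stdNormCDF_sub_le (by linarith) hcentre
    _ = stdNormCDF q - stdNormCDF p := by rw [hq, hp]

theorem stdNormCDF_mul_sub_le_sub_of_Icc_subset {κ p q r R : ℝ} (hκ : 0 ≤ κ) (hRp : -R ≤ p)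
    (hpq : p ≤ q) (hqR : q ≤ R) (hr : R - (q - p) ≤ r) :
    stdNormCDF (κ * R) - stdNormCDF (κ * r) ≤ stdNormCDF (κ * q) - stdNormCDF (κ * p) :=
  stdNormCDF_sub_le_sub_of_Icc_subset (by nlinarith) (by gcongr) (by gcongr) (by nlinarith)

/-- The largest `y` with `adaLasso η y ≤ t`: the root of `y ^ 2 - t * y - η ^ 2` with the sign
of `t`, positive at `t = 0`. -/
noncomputable def adaLassoInv (η t : ℝ) : ℝ :=
  if 0 ≤ t then t / 2 + √((t / 2) ^ 2 + η ^ 2) else t / 2 - √((t / 2) ^ 2 + η ^ 2)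

theorem sub_sq_div_le_iff_of_pos {η y t : ℝ} (hy : 0 < y) :
    y - η ^ 2 / y ≤ t ↔ y ≤ t / 2 + √((t / 2) ^ 2 + η ^ 2) := by
  have hW := Real.sq_sqrt (show 0 ≤ (t / 2) ^ 2 + η ^ 2 by positivity)
  have hWt : t / 2 ≤ √((t / 2) ^ 2 + η ^ 2) :=
    Real.le_sqrt_of_sq_le (by nlinarith)
  rw [sub_le_comm, le_div_iff₀ hy]
  constructor
  · intro h
    nlinarith [Real.sqrt_nonneg ((t / 2) ^ 2 + η ^ 2)]
  · intro h
    nlinarith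

theorem sub_sq_div_le_iff_of_neg {η y t : ℝ} (hy : y < 0) :
    y - η ^ 2 / y ≤ t ↔ y ≤ t / 2 - √((t / 2) ^ 2 + η ^ 2) := by
  have hW := Real.sq_sqrt (show 0 ≤ (t / 2) ^ 2 + η ^ 2 by positivity)
  have hWt : -(t / 2) ≤ √((t / 2) ^ 2 + η ^ 2) :=
    Real.le_sqrt_of_sq_le (by nlinarith)
  rw [sub_le_comm, le_div_iff_of_neg hy]
  constructor
  · intro h
    nlinarith [Real.sqrt_nonneg ((t / 2) ^ 2 + η ^ 2)]
  · intro h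
    nlinarith

theorem adaLasso_le_iff {η : ℝ} (hη : 0 ≤ η) (y t : ℝ) :
    adaLasso η y ≤ t ↔ y ≤ adaLassoInv η t := by
  set W := √((t / 2) ^ 2 + η ^ 2)
  have hηW : η ≤ W := Real.le_sqrt_of_sq_le (by nlinarith)
  have htW : |t| / 2 ≤ W := Real.le_sqrt_of_sq_le (by rw [div_pow, sq_abs]; nlinarith)
  have hWt : W ≤ |t| / 2 + η :=
    Real.sqrt_le_iff.2
      ⟨by positivity, by rw [add_sq, div_pow, div_pow, sq_abs]; nlinarith [abs_nonneg t]⟩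
  have hyη : ¬|y| ≤ η → η < y ∨ y < -η := fun hy ↦ by
    rcases lt_abs.1 (not_le.1 hy) with h | h
    exacts [.inl h, .inr (by linarith)]
  unfold adaLasso adaLassoInv
  split_ifs with hy ht ht
  · exact iff_of_true ht (by linarith [le_of_abs_le hy])
  · exact iff_of_false ht (by linarith [neg_le_of_abs_le hy, abs_of_neg (not_le.1 ht)])
  · rcases hyη hy with hy | hy
    · exact sub_sq_div_le_iff_of_pos (by linarith)
    · refine iff_of_true ((sub_sq_div_le_iff_of_neg (by linarith)).2 ?_) (by linarith)
      linarith [abs_of_nonneg ht]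
  · rcases hyη hy with hy | hy
    · refine iff_of_false (fun h ↦ ?_) (by linarith)
      linarith [(sub_sq_div_le_iff_of_pos (by linarith)).1 h, abs_of_neg (not_le.1 ht)]
    · exact sub_sq_div_le_iff_of_neg (by linarith)

theorem gc_adaLasso_adaLassoInv {η : ℝ} (hη : 0 ≤ η) :
    GaloisConnection (adaLasso η) (adaLassoInv η) :=
  adaLasso_le_iff hη

theorem adaLasso_neg (η y : ℝ) : adaLasso η (-y) = -adaLasso η y := by
  unfold adaLasso
  rw [abs_neg]
  split_ifs
  · exact neg_zero.symm
  · rw [div_neg]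
    ring

theorem neg_adaLassoInv_le (η t : ℝ) : -adaLassoInv η t ≤ adaLassoInv η (-t) := by
  have hW := Real.sqrt_nonneg ((t / 2) ^ 2 + η ^ 2)
  unfold adaLassoInv
  split_ifs <;> simp only [neg_div, neg_sq] <;> linarith

theorem adaLasso_preimage_Icc {η : ℝ} (hη : 0 ≤ η) (s t : ℝ) :
    adaLasso η ⁻¹' Icc s t = Icc (-adaLassoInv η (-s)) (adaLassoInv η t) := by
  ext y
  simp only [mem_preimage, mem_Icc, neg_le, ← adaLasso_le_iff hη, adaLasso_neg, neg_le_neg_iff]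

theorem neg_adaLassoInv_neg_le_adaLassoInv {η s t : ℝ} (hη : 0 ≤ η) (hst : s ≤ t) :
    -adaLassoInv η (-s) ≤ adaLassoInv η t :=
  (neg_adaLassoInv_le η (-s)).trans <| by
    rw [neg_neg]
    exact (gc_adaLasso_adaLassoInv hη).monotone_u hst

/-- The shrinkage `|y - adaLasso η y|` at `y = adaLassoInv η t`. -/
noncomputable def adaLassoGap (η t : ℝ) : ℝ := √((t / 2) ^ 2 + η ^ 2) - |t| / 2

theorem adaLassoInv_of_nonneg {η t : ℝ} (ht : 0 ≤ t) :
    adaLassoInv η t = t + adaLassoGap η t := by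
  rw [adaLassoInv, if_pos ht, adaLassoGap, abs_of_nonneg ht]
  ring

theorem adaLassoInv_of_neg {η t : ℝ} (ht : t < 0) :
    adaLassoInv η t = t - adaLassoGap η t := by
  rw [adaLassoInv, if_neg ht.not_ge, adaLassoGap, abs_of_neg ht]
  ring

theorem continuous_adaLassoGap (η : ℝ) : Continuous (adaLassoGap η) := by
  unfold adaLassoGap
  fun_prop

theorem adaLassoGap_neg (η t : ℝ) : adaLassoGap η (-t) = adaLassoGap η t := by
  simp only [adaLassoGap, neg_div, neg_sq, abs_neg]

theorem adaLassoGap_zero {η : ℝ} (hη : 0 ≤ η) : adaLassoGap η 0 = η := by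
  simp [adaLassoGap, Real.sqrt_sq hη]

theorem adaLassoGap_nonneg (η t : ℝ) : 0 ≤ adaLassoGap η t :=
  sub_nonneg.2 <| Real.le_sqrt_of_sq_le <| by rw [div_pow, sq_abs, ← div_pow]; nlinarith

theorem adaLassoGap_le {η : ℝ} (hη : 0 ≤ η) (t : ℝ) : adaLassoGap η t ≤ η :=
  sub_le_iff_le_add.2 <| Real.sqrt_le_iff.2
    ⟨by positivity, by rw [add_sq, div_pow, div_pow, sq_abs]; nlinarith [abs_nonneg t]⟩

theorem le_add_adaLassoGap {η t : ℝ} (ht : 0 ≤ t) : η ≤ t + adaLassoGap η t := by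
  have : η ≤ √((t / 2) ^ 2 + η ^ 2) := Real.le_sqrt_of_sq_le (by nlinarith)
  rw [adaLassoGap, abs_of_nonneg ht]
  linarith

theorem antitoneOn_adaLassoGap (η : ℝ) : AntitoneOn (adaLassoGap η) (Ici 0) := by
  intro s hs t ht hst
  rw [mem_Ici] at hs ht
  have hS := Real.sq_sqrt (show 0 ≤ (s / 2) ^ 2 + η ^ 2 by positivity)
  have hsS : s / 2 ≤ √((s / 2) ^ 2 + η ^ 2) := Real.le_sqrt_of_sq_le (by nlinarith)
  have hT : √((t / 2) ^ 2 + η ^ 2) ≤ √((s / 2) ^ 2 + η ^ 2) + (t - s) / 2 :=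
    Real.sqrt_le_iff.2 ⟨by linarith, by nlinarith⟩
  simp only [adaLassoGap, abs_of_nonneg hs, abs_of_nonneg ht]
  linarith

/-- The convexity of `adaLassoGap η` on `[0, ∞)`, at the points `0, s, t, s + t`. -/
theorem adaLassoGap_add_adaLassoGap_le {η s t : ℝ} (hη : 0 ≤ η) (hs : 0 ≤ s) (ht : 0 ≤ t) :
    adaLassoGap η s + adaLassoGap η t ≤ η + adaLassoGap η (s + t) := by
  set A := √((s / 2) ^ 2 + η ^ 2)
  set B := √((t / 2) ^ 2 + η ^ 2)
  set C := √(((s + t) / 2) ^ 2 + η ^ 2)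
  have hA : A ^ 2 = (s / 2) ^ 2 + η ^ 2 := Real.sq_sqrt (by positivity)
  have hB : B ^ 2 = (t / 2) ^ 2 + η ^ 2 := Real.sq_sqrt (by positivity)
  have hC : C ^ 2 = ((s + t) / 2) ^ 2 + η ^ 2 := Real.sq_sqrt (by positivity)
  have hC0 : 0 ≤ C := Real.sqrt_nonneg _
  have hAB : A * B ≤ s * t / 4 + η * C := by
    rw [← Real.sqrt_mul (by positivity)]
    refine Real.sqrt_le_iff.2 ⟨by positivity, ?_⟩
    nlinarith [mul_nonneg (mul_nonneg hs ht) (mul_nonneg hη hC0), mul_nonneg hs ht,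
      mul_nonneg hη hη]
  have hsum : A + B ≤ η + C := by
    refine (pow_le_pow_iff_left₀ (by positivity) (by positivity) two_ne_zero).1 ?_
    nlinarith
  simp only [adaLassoGap, abs_of_nonneg hs, abs_of_nonneg ht, abs_of_nonneg (add_nonneg hs ht)]
  linarith

theorem gaussianReal_map_standardize (θ : ℝ) {n : ℕ} (hn : n ≠ 0) :
    (gaussianReal θ ((n : ℝ≥0))⁻¹).map (fun y ↦ √n * (y - θ)) = gaussianReal 0 1 := by
  change Measure.map ((√n * ·) ∘ (· - θ)) _ = _
  rw [← Measure.map_map (by fun_prop) (by fun_prop), gaussianReal_map_sub_const,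
    gaussianReal_map_const_mul, sub_self, mul_zero]
  congr
  ext
  simp [Real.sq_sqrt, hn]

theorem toReal_gaussianReal_Icc_eq_stdNormCDF_sub (θ : ℝ) {n : ℕ} (hn : n ≠ 0) {p q : ℝ}
    (hpq : p ≤ q) :
    (gaussianReal θ ((n : ℝ≥0))⁻¹ (Icc p q)).toReal =
      stdNormCDF (√n * (q - θ)) - stdNormCDF (√n * (p - θ)) := by
  have hκ : 0 < √(n : ℝ) := Real.sqrt_pos.2 (by positivity)
  have hpre : (fun y ↦ √n * (y - θ)) ⁻¹' Icc (√n * (p - θ)) (√n * (q - θ)) = Icc p q := by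
    ext y
    simp only [mem_preimage, mem_Icc, mul_le_mul_iff_right₀ hκ, sub_le_sub_iff_right]
  rw [← hpre, ← Measure.map_apply (by fun_prop) measurableSet_Icc,
    gaussianReal_map_standardize θ hn, toReal_gaussianReal_Icc]
  gcongr

theorem cover_eq_preimage (n : ℕ) (est : ℝ → ℝ) (a b θ : ℝ) :
    cover n est a b θ = (gaussianReal θ ((n : ℝ≥0))⁻¹ (est ⁻¹' Icc (θ - b) (θ + a))).toReal := by
  rw [cover]
  congr with y
  simp only [mem_Icc, sub_le_iff_le_add]
  constructor <;> rintro ⟨h₁, h₂⟩ <;> constructor <;> linarith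

theorem cover_adaLasso_eq {n : ℕ} (hn : n ≠ 0) {η a b : ℝ} (hη : 0 ≤ η) (hab₀ : 0 ≤ a + b)
    (θ : ℝ) :
    cover n (adaLasso η) a b θ =
      stdNormCDF (√n * (adaLassoInv η (a + θ) - θ)) +
        stdNormCDF (√n * (adaLassoInv η (b - θ) + θ)) - 1 := by
  rw [cover_eq_preimage, adaLasso_preimage_Icc hη,
    toReal_gaussianReal_Icc_eq_stdNormCDF_sub θ hn
      (neg_adaLassoInv_neg_le_adaLassoInv hη (by linarith)), neg_sub, add_comm θ a,
    show √n * (-adaLassoInv η (b - θ) - θ) = -(√n * (adaLassoInv η (b - θ) + θ)) by ring,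
    stdNormCDF_neg]
  ring

theorem le_cover_adaLasso {n : ℕ} (hn : n ≠ 0) {η a b : ℝ} (hη : 0 ≤ η) (hab : a ≤ b)
    (hab₀ : 0 ≤ a + b) (θ : ℝ) :
    stdNormCDF (√n * (a - η)) + stdNormCDF (√n * (b + adaLassoGap η (a + b))) - 1 ≤
      cover n (adaLasso η) a b θ := by
  have hκ : 0 ≤ √(n : ℝ) := Real.sqrt_nonneg _
  have hRp : -(b + adaLassoGap η (a + b)) ≤ a - η := by
    linarith [le_add_adaLassoGap hab₀ (η := η)]
  have hgap {x s : ℝ} (hx : x ≤ 0) (hs : a + b - x = s) :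
      adaLassoGap η (a + b) + adaLassoGap η x ≤ η + adaLassoGap η s := by
    have := adaLassoGap_add_adaLassoGap_le hη hab₀ (neg_nonneg.2 hx)
    rwa [adaLassoGap_neg, ← sub_eq_add_neg, hs] at this
  rw [cover_adaLasso_eq hn hη hab₀, sub_le_sub_iff_right]
  rcases lt_or_ge (a + θ) 0 with hθa | hθa
  · have key := stdNormCDF_mul_sub_le_sub_of_Icc_subset hκ hRp (q := a - adaLassoGap η (a + θ))
      (r := b + adaLassoGap η (b - θ)) (by linarith [adaLassoGap_le hη (a + θ)])
      (by linarith [adaLassoGap_nonneg η (a + θ), adaLassoGap_nonneg η (a + b)])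
      (by linarith [hgap (x := a + θ) (s := b - θ) hθa.le (by ring)])
    rw [adaLassoInv_of_neg hθa, adaLassoInv_of_nonneg (by linarith),
      show a + θ - adaLassoGap η (a + θ) - θ = a - adaLassoGap η (a + θ) by ring,
      show b - θ + adaLassoGap η (b - θ) + θ = b + adaLassoGap η (b - θ) by ring]
    linarith
  rcases le_or_gt 0 (b - θ) with hθb | hθb
  · rw [adaLassoInv_of_nonneg hθa, adaLassoInv_of_nonneg hθb,
      show a + θ + adaLassoGap η (a + θ) - θ = a + adaLassoGap η (a + θ) by ring,
      show b - θ + adaLassoGap η (b - θ) + θ = b + adaLassoGap η (b - θ) by ring]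
    have h₁ := adaLassoGap_nonneg η (a + θ)
    have h₂ := antitoneOn_adaLassoGap η (mem_Ici.2 hθb) (mem_Ici.2 hab₀) (by linarith)
    gcongr ?_ + ?_ <;> exact monotone_stdNormCDF (by gcongr <;> linarith)
  · have key := stdNormCDF_mul_sub_le_sub_of_Icc_subset hκ hRp (q := a + adaLassoGap η (a + θ))
      (r := b - adaLassoGap η (b - θ)) (by linarith [adaLassoGap_nonneg η (a + θ)])
      (by linarith [antitoneOn_adaLassoGap η (mem_Ici.2 hab₀) (mem_Ici.2 hθa) (by linarith)])
      (by linarith [hgap (x := b - θ) (s := a + θ) hθb.le (by ring)])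
    rw [adaLassoInv_of_nonneg hθa, adaLassoInv_of_neg hθb,
      show a + θ + adaLassoGap η (a + θ) - θ = a + adaLassoGap η (a + θ) by ring,
      show b - θ - adaLassoGap η (b - θ) + θ = b - adaLassoGap η (b - θ) by ring]
    linarith

theorem tendsto_cover_adaLasso {n : ℕ} (hn : n ≠ 0) {η a b : ℝ} (hη : 0 ≤ η) (hab₀ : 0 ≤ a + b) :
    Tendsto (cover n (adaLasso η) a b) (𝓝[<] (-a))
      (𝓝 (stdNormCDF (√n * (a - η)) + stdNormCDF (√n * (b + adaLassoGap η (a + b))) - 1)) := by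
  set F : ℝ → ℝ := fun θ ↦ stdNormCDF (√n * (a - adaLassoGap η (a + θ))) +
    stdNormCDF (√n * (b + adaLassoGap η (b - θ))) - 1
  have hF : Continuous F := by
    have := continuous_adaLassoGap η
    have := continuous_stdNormCDF
    fun_prop
  have hFa : F (-a) = stdNormCDF (√n * (a - η)) +
      stdNormCDF (√n * (b + adaLassoGap η (a + b))) - 1 := by
    simp only [F, add_neg_cancel, adaLassoGap_zero hη, sub_neg_eq_add, add_comm b a]
  refine hFa ▸ (hF.tendsto (-a)).mono_left nhdsWithin_le_nhds |>.congr' ?_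
  filter_upwards [self_mem_nhdsWithin] with θ hθ
  have hθa : a + θ < 0 := by linarith [mem_Iio.1 hθ]
  rw [cover_adaLasso_eq hn hη hab₀, adaLassoInv_of_neg hθa, adaLassoInv_of_nonneg (by linarith)]
  simp only [F]
  congr 3 <;> ring

theorem iInf_cover_adaLasso_of_le {n : ℕ} (hn : n ≠ 0) {η a b : ℝ} (hη : 0 ≤ η) (hab : a ≤ b)
    (hab₀ : 0 ≤ a + b) :
    ⨅ θ, cover n (adaLasso η) a b θ =
      stdNormCDF (√n * (a - η)) -
        stdNormCDF (√n * ((a - b) / 2 - √(((a + b) / 2) ^ 2 + η ^ 2))) := by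
  rw [ciInf_eq_of_forall_le_of_tendsto (le_cover_adaLasso hn hη hab hab₀)
    (tendsto_cover_adaLasso hn hη hab₀), adaLassoGap, abs_of_nonneg hab₀,
    show √n * ((a - b) / 2 - √(((a + b) / 2) ^ 2 + η ^ 2)) =
      -(√n * (b + (√(((a + b) / 2) ^ 2 + η ^ 2) - (a + b) / 2))) by ring, stdNormCDF_neg]
  ring

theorem cover_adaLasso_swap {n : ℕ} (hn : n ≠ 0) {η a b : ℝ} (hη : 0 ≤ η) (hab₀ : 0 ≤ a + b)
    (θ : ℝ) : cover n (adaLasso η) a b θ = cover n (adaLasso η) b a (-θ) := by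
  rw [cover_adaLasso_eq hn hη hab₀, cover_adaLasso_eq hn hη (by linarith)]
  simp only [sub_neg_eq_add, ← sub_eq_add_neg]
  ring

/-- Proposition 3 (adaptive LASSO): the infimal coverage probability of
`C_{A,n} = [θ̂_A - a, θ̂_A + b]`. -/
theorem stmt_3 (n : ℕ) (hn : 1 ≤ n) (η a b : ℝ) (hη : 0 < η) (ha : 0 ≤ a) (hb : 0 ≤ b) :
    (a ≤ b →
      (⨅ θ : ℝ, cover n (adaLasso η) a b θ) =
        stdNormCDF (Real.sqrt n * (a - η)) -
          stdNormCDF (Real.sqrt n *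
            ((a - b) / 2 - Real.sqrt (((a + b) / 2) ^ 2 + η ^ 2)))) ∧
    (b < a →
      (⨅ θ : ℝ, cover n (adaLasso η) a b θ) =
        stdNormCDF (Real.sqrt n * (b - η)) -
          stdNormCDF (Real.sqrt n *
            ((b - a) / 2 - Real.sqrt (((a + b) / 2) ^ 2 + η ^ 2)))) := by
  have hn₀ : n ≠ 0 := Nat.one_le_iff_ne_zero.1 hn
  refine ⟨fun hab ↦ iInf_cover_adaLasso_of_le hn₀ hη.le hab (add_nonneg ha hb), fun hba ↦ ?_⟩
  rw [iInf_congr (cover_adaLasso_swap hn₀ hη.le (add_nonneg ha hb)), neg_surjective.iInf_comp,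
    iInf_cover_adaLasso_of_le hn₀ hη.le hba.le (add_nonneg hb ha), add_comm b a]
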